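/- arXiv:0712.3135 — 2 statements merged into one kernel-verified Lean document; each statement's English description precedes it below -/
import Mathlib

section
/- Let A, dA be disjoint finite subsets of G and set ν_{A,dA} = (∏_{x∈A} ν_x) * (∏_{y∈dA} ν̄_y) in the group algebra of H ≀ G, where ν̄_y = δ_{(1,e)} − ν_y. Then ν_{A,dA} is idempotent: ν_{A,dA} * ν_{A,dA} = ν_{A,dA}, and its value at the identity is ν_{A,dA}(1,e) = p^{|A|}(1−p)^{|dA|} where p = 1/|H|. -/
open Function MonoidAlgebra
open scoped Classical
set_option linter.unusedSectionVars false

noncomputable section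

variable (G H : Type) [Group G] [Group H] [Fintype H]

/-- The automorphism `L_g` of the full group of configurations `G → H`,
`(L_g η)(x) = η (g⁻¹ x)`. -/
def lampAut (g : G) : (G → H) ≃* (G → H) where
  toFun η := fun x => η (g⁻¹ * x)
  invFun η := fun x => η (g * x)
  left_inv η := by funext x; simp [← mul_assoc]
  right_inv η := by funext x; simp [← mul_assoc]
  map_mul' η η' := rfl

/-- The action homomorphism `G →* MulAut (G → H)`. -/
def lampHom : G →* MulAut (G → H) where
  toFun := lampAut G H
  map_one' := by ext η x; simp [lampAut]
  map_mul' g₁ g₂ := by ext η x; simp [lampAut, MulAut.mul_apply, mul_assoc]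

/-- The unrestricted wreath product `(H^G) ⋊ G`. -/
abbrev WrFull := (G → H) ⋊[lampHom G H] G

/-- The (restricted) wreath product `H ≀ G = (⊕_G H) ⋊ G`, realized as the
subgroup of the unrestricted wreath product consisting of the elements whose
configuration has finite support. -/
def Wreath : Subgroup (WrFull G H) where
  carrier := {w | (mulSupport w.left).Finite}
  one_mem' := by
    simp only [Set.mem_setOf_eq, SemidirectProduct.one_left]
    simp [mulSupport]
  mul_mem' := by
    intro a b ha hb
    simp only [Set.mem_setOf_eq, SemidirectProduct.mul_left] at *
    refine (ha.union ?_).subset (mulSupport_mul _ _)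
    have : mulSupport (lampHom G H a.right b.left) =
        (fun x => (a.right)⁻¹ * x) ⁻¹' mulSupport b.left := by
      ext x
      simp [lampHom, lampAut, mulSupport]
    rw [this]
    exact hb.preimage (by
      intro x _ y _ h
      simpa using mul_left_cancel h)
  inv_mem' := by
    intro a ha
    simp only [Set.mem_setOf_eq, SemidirectProduct.inv_left] at *
    have : mulSupport (lampHom G H (a.right)⁻¹ (a.left)⁻¹) =
        (fun x => a.right * x) ⁻¹' mulSupport a.left := by
      ext x
      simp [lampHom, lampAut, mulSupport]
    rw [this]
    exact ha.preimage (by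
      intro x _ y _ h
      simpa using mul_left_cancel h)

/-- The configuration which has state `h` at the point `g` and is trivial
elsewhere. -/
def pointConf (g : G) (h : H) : G → H := fun x => if x = g then h else 1

lemma pointConf_finite (g : G) (h : H) : (mulSupport (pointConf G H g h)).Finite := by
  apply (Set.finite_singleton g).subset
  intro x hx
  by_contra hxg
  simp only [Set.mem_singleton_iff] at hxg
  simp [mulSupport, pointConf, hxg] at hx

/-- A finitely supported configuration together with a position, as an
element of the wreath product. -/
def wr (η : G → H) (hη : (mulSupport η).Finite) (g : G) : Wreath G H :=
  ⟨⟨η, g⟩, hη⟩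

/-- The embedding of the base group `G` in the wreath product, `g ↦ (1, g)`. -/
def embG (g : G) : Wreath G H :=
  wr G H 1 (by simp [mulSupport]) g

/-- The embedding of the lamp group `H` in the wreath product,
`h ↦ (η_e^h, e)`. -/
def embH (h : H) : Wreath G H :=
  wr G H (pointConf G H 1 h) (pointConf_finite G H 1 h) 1

/-- The point mass `δ_g` at the embedded element `g ∈ G`, as an element of the
group algebra of the wreath product. -/
def deltaG (g : G) : MonoidAlgebra ℝ (Wreath G H) :=
  MonoidAlgebra.single (embG G H g) 1

/-- The uniform probability measure `ν` on the embedded copy of `H` inside the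
wreath product. -/
def nu : MonoidAlgebra ℝ (Wreath G H) :=
  ∑ h : H, MonoidAlgebra.single (embH G H h) ((Fintype.card H : ℝ)⁻¹)

/-- The translated uniform measure `ν_g = δ_g * ν * δ_{g⁻¹}`. -/
def nuAt (g : G) : MonoidAlgebra ℝ (Wreath G H) :=
  deltaG G H g * nu G H * deltaG G H g⁻¹

/-- The complementary projection `ν̄_g = δ_{(1,e)} - ν_g`. -/
def nuBarAt (g : G) : MonoidAlgebra ℝ (Wreath G H) :=
  1 - nuAt G H g

end

/-! `ν_x` is the uniform average over the finite subgroup of lamps sitting at `x`, hence an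
idempotent, and `ν_x`, `ν̄_y` commute because lamps at different points commute (for `x = y`
trivially, as `ν̄_x = 1 - ν_x`). A product of commuting idempotents is idempotent.

For the value at the identity: if `μ` and `σ` are supported on subgroups meeting only in `1`,
then `μ * σ` reaches `1` only as `1 * 1`, so `(μ * σ)(1) = μ(1) σ(1)`. The factors of
`ν_{A,dA}` are supported on lamp configurations over pairwise disjoint sets of points, and
`ν_x(1) = 1/|H|`, `ν̄_y(1) = 1 - 1/|H|`. -/

lemma Finset.isIdempotentElem_noncommProd {ι M : Type*} [Monoid M] (s : Finset ι) (f : ι → M)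
    (comm : (s : Set ι).Pairwise (Commute on f)) (hf : ∀ i ∈ s, IsIdempotentElem (f i)) :
    IsIdempotentElem (s.noncommProd f comm) := by
  induction s using Finset.induction_on with
  | empty => simpa using IsIdempotentElem.one
  | insert a s ha ih =>
    rw [Finset.noncommProd_insert_of_notMem _ _ _ _ ha]
    refine (hf a (mem_insert_self a s)).mul_of_commute ?_
      (ih _ fun i hi => hf i (mem_insert_of_mem hi))
    exact Finset.noncommProd_commute _ _ _ _ fun i hi =>
      comm (mem_insert_self a s) (mem_insert_of_mem hi) (ne_of_mem_of_not_mem hi ha).symm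

namespace MonoidAlgebra

variable {k Γ : Type*}

section Group

variable [Semiring k] [Group Γ]

lemma one_mem_supported_subgroup (K : Subgroup Γ) : (1 : k[Γ]) ∈ supported k k (K : Set Γ) :=
  fun g hg => by
    rw [Finset.mem_one.mp (support_coeff_one_subset hg)]
    exact K.one_mem

lemma mul_mem_supported_subgroup {K : Subgroup Γ} {x y : k[Γ]}
    (hx : x ∈ supported k k (K : Set Γ)) (hy : y ∈ supported k k (K : Set Γ)) :
    x * y ∈ supported k k (K : Set Γ) := by
  intro g hg
  obtain ⟨a, ha, b, hb, rfl⟩ := Finset.mem_mul.mp (support_coeff_mul_subset x y hg)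
  exact K.mul_mem (hx ha) (hy hb)

lemma coeff_mul_one_of_disjoint {K L : Subgroup Γ} (hKL : Disjoint K L) {x y : k[Γ]}
    (hx : x ∈ supported k k (K : Set Γ)) (hy : y ∈ supported k k (L : Set Γ)) :
    (x * y).coeff 1 = x.coeff 1 * y.coeff 1 := by
  rw [coeff_mul_apply_left, Finsupp.sum_eq_single 1]
  · simp
  · intro g hxg hg
    suffices y.coeff g⁻¹ = 0 by simp [this]
    by_contra hyg
    have hgK : g⁻¹ ∈ K := K.inv_mem (hx (Finsupp.mem_support_iff.mpr hxg))
    exact hg (inv_eq_one.mp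
      (Subgroup.disjoint_def.mp hKL hgK (hy (Finsupp.mem_support_iff.mpr hyg))))
  · simp

end Group

variable {H : Type*} [Group H] [Fintype H] [Monoid Γ]

lemma isIdempotentElem_sum_single_hom [DivisionSemiring k] [CharZero k] (f : H →* Γ) :
    IsIdempotentElem (∑ h : H, single (f h) (Fintype.card H : k)⁻¹) := by
  set c := (Fintype.card H : k)⁻¹
  have hrow (h : H) :
      single (f h) c * ∑ h' : H, single (f h') c = ∑ h' : H, single (f h') (c * c) := by
    rw [Finset.mul_sum]
    exact Fintype.sum_equiv (Equiv.mulLeft h) _ _ fun h' => by simp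
  have hcard : (Fintype.card H : k) * c = 1 :=
    mul_inv_cancel₀ (Nat.cast_ne_zero.mpr Fintype.card_ne_zero)
  unfold IsIdempotentElem
  rw [Finset.sum_mul, Finset.sum_congr rfl fun h _ => hrow h, Finset.sum_const,
    Finset.card_univ, Finset.smul_sum]
  refine Finset.sum_congr rfl fun h _ => ?_
  rw [smul_single, nsmul_eq_mul, ← mul_assoc, hcard, one_mul]

lemma coeff_one_sum_single_hom [Semiring k] {f : H →* Γ} (hf : Function.Injective f) (c : k) :
    (∑ h : H, single (f h) c).coeff 1 = c := by
  simp [coeff_sum, Finsupp.single_apply, map_eq_one_iff f hf]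

end MonoidAlgebra

open MonoidAlgebra

section Lamps

variable (G H : Type) [Group G] [Group H] [Fintype H]

def lampsIn (S : Set G) : Subgroup (Wreath G H) where
  carrier := {w | (w : WrFull G H).right = 1 ∧ mulSupport (w : WrFull G H).left ⊆ S}
  one_mem' := ⟨rfl, by simp⟩
  mul_mem' := by
    rintro a b ⟨ha, haS⟩ ⟨hb, hbS⟩
    refine ⟨by simp [ha, hb], ?_⟩
    simpa [ha] using (mulSupport_mul _ _).trans (Set.union_subset haS hbS)
  inv_mem' := by
    rintro a ⟨ha, haS⟩
    exact ⟨by simp [ha], by simpa [ha] using haS⟩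

noncomputable def lampAt (x : G) : H →* Wreath G H :=
  (SemidirectProduct.inl.comp (MonoidHom.mulSingle (fun _ : G => H) x)).codRestrict (Wreath G H)
    fun _ => (Set.finite_singleton x).subset Pi.mulSupport_mulSingle_subset

variable {G H}

lemma lampsIn_mono {S T : Set G} (hST : S ⊆ T) : lampsIn G H S ≤ lampsIn G H T :=
  fun _ hw => ⟨hw.1, hw.2.trans hST⟩

lemma disjoint_lampsIn {S T : Set G} (hST : Disjoint S T) :
    Disjoint (lampsIn G H S) (lampsIn G H T) := by
  refine Subgroup.disjoint_def.mpr fun {w} hS hT => Subtype.ext (SemidirectProduct.ext ?_ hS.1)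
  exact mulSupport_eq_empty_iff.mp
    (Set.subset_empty_iff.mp fun z hz => Set.disjoint_left.mp hST (hS.2 hz) (hT.2 hz))

@[simp]
lemma coe_lampAt (x : G) (h : H) :
    (lampAt G H x h : WrFull G H) = SemidirectProduct.inl (Pi.mulSingle x h) :=
  rfl

lemma lampAt_injective (x : G) : Function.Injective (lampAt G H x) := fun h h' e => by
  simpa using congrArg (fun w : Wreath G H => (w : WrFull G H).left x) e

lemma lampAt_mem_lampsIn (x : G) (h : H) : lampAt G H x h ∈ lampsIn G H {x} :=
  ⟨rfl, Pi.mulSupport_mulSingle_subset⟩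

lemma commute_lampAt {x y : G} (hxy : x ≠ y) (h h' : H) :
    Commute (lampAt G H x h) (lampAt G H y h') :=
  Subtype.ext <| by
    simpa using ((Pi.mulSingle_commute (f := fun _ : G => H) hxy h h').map
      SemidirectProduct.inl).eq

lemma embG_mul_embH_mul_embG_inv (x : G) (h : H) :
    embG G H x * embH G H h * embG G H x⁻¹ = lampAt G H x h := by
  refine Subtype.ext ?_
  change SemidirectProduct.inr x * SemidirectProduct.inl (pointConf G H 1 h) *
    SemidirectProduct.inr x⁻¹ = SemidirectProduct.inl (Pi.mulSingle x h)
  rw [← SemidirectProduct.inl_aut]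
  congr 1
  funext z
  simp [lampHom, lampAut, pointConf, Pi.mulSingle_apply, inv_mul_eq_one, eq_comm]

lemma nuAt_eq_sum_lampAt (x : G) :
    nuAt G H x = ∑ h : H, single (lampAt G H x h) (Fintype.card H : ℝ)⁻¹ := by
  simp only [nuAt, nu, deltaG, Finset.mul_sum, Finset.sum_mul, single_mul_single,
    embG_mul_embH_mul_embG_inv, one_mul, mul_one]

lemma isIdempotentElem_nuAt (x : G) : IsIdempotentElem (nuAt G H x) := by
  rw [nuAt_eq_sum_lampAt]
  exact isIdempotentElem_sum_single_hom _

lemma isIdempotentElem_nuBarAt (x : G) : IsIdempotentElem (nuBarAt G H x) :=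
  (isIdempotentElem_nuAt x).one_sub

lemma coeff_one_nuAt (x : G) : (nuAt G H x).coeff 1 = (Fintype.card H : ℝ)⁻¹ := by
  rw [nuAt_eq_sum_lampAt, coeff_one_sum_single_hom (lampAt_injective x)]

lemma coeff_one_nuBarAt (x : G) : (nuBarAt G H x).coeff 1 = 1 - (Fintype.card H : ℝ)⁻¹ := by
  rw [nuBarAt, coeff_sub, Finsupp.sub_apply, coeff_one_one, coeff_one_nuAt]

lemma nuAt_mem_supported (x : G) : nuAt G H x ∈ supported ℝ ℝ (lampsIn G H {x} : Set _) := by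
  rw [nuAt_eq_sum_lampAt]
  exact Submodule.sum_mem _ fun h _ =>
    Finsupp.single_mem_supported ℝ _ (lampAt_mem_lampsIn x h)

lemma nuBarAt_mem_supported (x : G) :
    nuBarAt G H x ∈ supported ℝ ℝ (lampsIn G H {x} : Set _) :=
  Submodule.sub_mem _ (one_mem_supported_subgroup _) (nuAt_mem_supported x)

lemma commute_nuAt (x y : G) : Commute (nuAt G H x) (nuAt G H y) := by
  obtain rfl | hxy := eq_or_ne x y
  · exact Commute.refl _
  rw [nuAt_eq_sum_lampAt, nuAt_eq_sum_lampAt]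
  exact Commute.sum_left _ _ _ fun h _ => Commute.sum_right _ _ _ fun h' _ =>
    single_commute_single (commute_lampAt hxy h h') (Commute.refl _)

lemma commute_nuAt_nuBarAt (x y : G) : Commute (nuAt G H x) (nuBarAt G H y) :=
  (Commute.one_right _).sub_right (commute_nuAt x y)

lemma noncommProd_mem_supported_lampsIn {k : Type*} [Semiring k] {f : G → k[Wreath G H]}
    (hf : ∀ x, f x ∈ supported k k (lampsIn G H {x} : Set _)) (s : Finset G) (comm) :
    s.noncommProd f comm ∈ supported k k (lampsIn G H s : Set _) :=
  Finset.noncommProd_induction _ _ _ _ (fun _ _ => mul_mem_supported_subgroup)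
    (one_mem_supported_subgroup _) fun x hx =>
      supported_mono (lampsIn_mono (Set.singleton_subset_iff.mpr hx)) (hf x)

lemma coeff_one_noncommProd_of_mem_supported_lampsIn {k : Type*} [CommSemiring k]
    {f : G → k[Wreath G H]}
    (hf : ∀ x, f x ∈ supported k k (lampsIn G H {x} : Set _)) (s : Finset G) (comm) :
    (s.noncommProd f comm).coeff 1 = ∏ x ∈ s, (f x).coeff 1 := by
  induction s using Finset.induction_on with
  | empty => simp
  | insert a s ha ih =>
    rw [Finset.noncommProd_insert_of_notMem _ _ _ _ ha, Finset.prod_insert ha,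
      coeff_mul_one_of_disjoint (disjoint_lampsIn (Set.disjoint_singleton_left.mpr ha)) (hf a)
        (noncommProd_mem_supported_lampsIn hf s _), ih]

end Lamps

/-- For disjoint finite sets `A, dA ⊆ G`, the element
`ν_{A,dA} = (∏_{x∈A} ν_x) * (∏_{y∈dA} ν̄_y)` of the group algebra of `H ≀ G`
is idempotent, and its value at the identity `(1,e)` is `p^{|A|}(1-p)^{|dA|}`
where `p = 1/|H|`. -/
theorem nuBoundary_idempotent (G H : Type) [Group G] [Group H] [Fintype H]
    (A dA : Finset G) (hdisj : Disjoint A dA)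
    (hcA : (A : Set G).Pairwise fun a b => Commute (nuAt G H a) (nuAt G H b))
    (hcdA : (dA : Set G).Pairwise fun a b => Commute (nuBarAt G H a) (nuBarAt G H b)) :
    (A.noncommProd (nuAt G H) hcA * dA.noncommProd (nuBarAt G H) hcdA) *
      (A.noncommProd (nuAt G H) hcA * dA.noncommProd (nuBarAt G H) hcdA)
      = A.noncommProd (nuAt G H) hcA * dA.noncommProd (nuBarAt G H) hcdA ∧
    (A.noncommProd (nuAt G H) hcA * dA.noncommProd (nuBarAt G H) hcdA).coeff
        (1 : Wreath G H)
      = ((Fintype.card H : ℝ))⁻¹ ^ A.card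
          * (1 - ((Fintype.card H : ℝ))⁻¹) ^ dA.card := by
  have hA : IsIdempotentElem (A.noncommProd (nuAt G H) hcA) :=
    A.isIdempotentElem_noncommProd _ hcA fun x _ => isIdempotentElem_nuAt x
  have hdA : IsIdempotentElem (dA.noncommProd (nuBarAt G H) hcdA) :=
    dA.isIdempotentElem_noncommProd _ hcdA fun x _ => isIdempotentElem_nuBarAt x
  have hcomm : Commute (A.noncommProd (nuAt G H) hcA) (dA.noncommProd (nuBarAt G H) hcdA) :=
    Finset.noncommProd_commute _ _ _ _ fun y _ =>
      (Finset.noncommProd_commute _ _ _ _ fun x _ => (commute_nuAt_nuBarAt x y).symm).symm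
  refine ⟨hA.mul_of_commute hcomm hdA, ?_⟩
  rw [coeff_mul_one_of_disjoint (disjoint_lampsIn (Finset.disjoint_coe.mpr hdisj))
      (noncommProd_mem_supported_lampsIn nuAt_mem_supported A hcA)
      (noncommProd_mem_supported_lampsIn nuBarAt_mem_supported dA hcdA),
    coeff_one_noncommProd_of_mem_supported_lampsIn nuAt_mem_supported,
    coeff_one_noncommProd_of_mem_supported_lampsIn nuBarAt_mem_supported]
  simp only [coeff_one_nuAt, coeff_one_nuBarAt, Finset.prod_const]
end

section
/- Let G be a group with finite symmetric generating set S, μ symmetric probability supported on S, H a finite group with p = 1/|H|. Consider the random walk with 'lamps on edges': state space (⊕_E H) ⋊ G where E is the edge set of the Cayley graph, and law μ̃_ed(η, g) = μ(g)/|H| if g ∈ S and supp(η) ⊆ {[e,g]}, and 0 otherwise. Then μ̃_ed^{(n)}(1, e) = E[ p^{|{[Z_0,Z_1], ..., [Z_{n-1},Z_n]}|} · 1_{Z_n = e} ], the expectation of p to the number of distinct edges crossed by the μ-random walk (Z_k) returning to e at time n. -/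
open Function MonoidAlgebra
open scoped Classical
set_option linter.unusedSectionVars false

noncomputable section

variable (G H : Type) [Group G] [Group H] [Fintype H]

/-- Left translation of `G` on unoriented edges (elements of `Sym2 G`). -/
def edgeSmul (g : G) (e : Sym2 G) : Sym2 G := Sym2.map (fun x => g * x) e

lemma edgeSmul_edgeSmul (g g' : G) (e : Sym2 G) :
    edgeSmul G g (edgeSmul G g' e) = edgeSmul G (g * g') e := by
  unfold edgeSmul
  rw [Sym2.map_map]
  congr 1
  funext x
  simp [mul_assoc]

lemma edgeSmul_one (e : Sym2 G) : edgeSmul G 1 e = e := by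
  unfold edgeSmul
  simpa using congrFun Sym2.map_id e

lemma edgeSmul_injective (g : G) : Function.Injective (edgeSmul G g) := by
  intro e₁ e₂ h
  have := congrArg (edgeSmul G g⁻¹) h
  rwa [edgeSmul_edgeSmul, edgeSmul_edgeSmul, inv_mul_cancel, edgeSmul_one,
    edgeSmul_one] at this

/-- The automorphism of edge configurations induced by `g ∈ G`. -/
def lampAutE (g : G) : (Sym2 G → H) ≃* (Sym2 G → H) where
  toFun η := fun e => η (edgeSmul G g⁻¹ e)
  invFun η := fun e => η (edgeSmul G g e)
  left_inv η := by
    funext e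
    show η (edgeSmul G g⁻¹ (edgeSmul G g e)) = η e
    rw [edgeSmul_edgeSmul, inv_mul_cancel, edgeSmul_one]
  right_inv η := by
    funext e
    show η (edgeSmul G g (edgeSmul G g⁻¹ e)) = η e
    rw [edgeSmul_edgeSmul, mul_inv_cancel, edgeSmul_one]
  map_mul' η η' := rfl

/-- The action homomorphism `G →* MulAut (Sym2 G → H)`. -/
def lampHomE : G →* MulAut (Sym2 G → H) where
  toFun := lampAutE G H
  map_one' := by
    ext η e
    simp [lampAutE, edgeSmul_one]
  map_mul' g₁ g₂ := by
    ext η e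
    simp [lampAutE, MulAut.mul_apply, edgeSmul_edgeSmul]

/-- The unrestricted wreath product over the edge set. -/
abbrev WrEFull := (Sym2 G → H) ⋊[lampHomE G H] G

/-- The wreath product `(⊕_E H) ⋊ G` with lamps on the (unoriented) edges,
realized as the subgroup of finitely supported configurations. -/
def WreathE : Subgroup (WrEFull G H) where
  carrier := {w | (mulSupport w.left).Finite}
  one_mem' := by
    simp only [Set.mem_setOf_eq, SemidirectProduct.one_left]
    simp [mulSupport]
  mul_mem' := by
    intro a b ha hb
    simp only [Set.mem_setOf_eq, SemidirectProduct.mul_left] at *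
    refine (ha.union ?_).subset (mulSupport_mul _ _)
    have : mulSupport (lampHomE G H a.right b.left) =
        edgeSmul G (a.right)⁻¹ ⁻¹' mulSupport b.left := by
      ext e
      simp [lampHomE, lampAutE, mulSupport]
    rw [this]
    exact hb.preimage ((edgeSmul_injective G _).injOn)
  inv_mem' := by
    intro a ha
    simp only [Set.mem_setOf_eq, SemidirectProduct.inv_left] at *
    have : mulSupport (lampHomE G H (a.right)⁻¹ (a.left)⁻¹) =
        edgeSmul G a.right ⁻¹' mulSupport a.left := by
      ext e
      simp [lampHomE, lampAutE, mulSupport]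
    rw [this]
    exact ha.preimage ((edgeSmul_injective G _).injOn)

/-- The edge configuration with state `h` on the edge `e₀` and trivial
elsewhere. -/
def pointConfE (e₀ : Sym2 G) (h : H) : Sym2 G → H := fun e => if e = e₀ then h else 1

lemma pointConfE_finite (e₀ : Sym2 G) (h : H) :
    (mulSupport (pointConfE G H e₀ h)).Finite := by
  apply (Set.finite_singleton e₀).subset
  intro e he
  by_contra heq
  simp only [Set.mem_singleton_iff] at heq
  simp [mulSupport, pointConfE, heq] at he

/-- Element of the edge wreath product from a finitely supported edge
configuration and a position. -/
def wrE (η : Sym2 G → H) (hη : (mulSupport η).Finite) (g : G) : WreathE G H :=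
  ⟨⟨η, g⟩, hη⟩

/-- The embedding of the base group. -/
def embGE (g : G) : WreathE G H :=
  wrE G H 1 (by simp [mulSupport]) g

/-- The point mass at the embedded `g ∈ G`. -/
def deltaGE (g : G) : MonoidAlgebra ℝ (WreathE G H) :=
  MonoidAlgebra.single (embGE G H g) 1

/-- The uniform measure on the lamp group sitting on the edge `e₀`. -/
def nuEdge (e₀ : Sym2 G) : MonoidAlgebra ℝ (WreathE G H) :=
  ∑ h : H, MonoidAlgebra.single
    (wrE G H (pointConfE G H e₀ h) (pointConfE_finite G H e₀ h) 1)
    ((Fintype.card H : ℝ)⁻¹)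

end

/-!
Expand the `n`-th power along the sequence `q` of base steps. A product of lamp steps along
`q` is the uniform average, over increments `h ∈ Hⁿ`, of the element whose lamp on an edge `e`
is the ordered product of the increments placed while crossing `e`
(`fiberProd (walkEdge q) h e`). The return condition asks all these products to be trivial,
and for uniform `h` the products over the distinct edges are independent and uniform on `H`:
the first increment is absorbed by the constraint on its edge, or is itself constrained when
its edge is not crossed again. Hence the condition has probability `p ^ #edges`.
-/

section NoncommExpansion

theorem Fin.sum_pi_cons {β M : Type*} [Fintype β] [AddCommMonoid M] {n : ℕ}
    (f : (Fin (n + 1) → β) → M) :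
    ∑ h, f h = ∑ b : β, ∑ h : Fin n → β, f (Fin.cons b h) := by
  rw [← Fintype.sum_prod_type']
  exact (Fintype.sum_equiv (Fin.consEquiv fun _ => β) _ _ fun _ => rfl).symm

theorem Finset.sum_pow_eq_sum_prod_ofFn {R ι : Type*} [Semiring R] (s : Finset ι) (f : ι → R) :
    ∀ n : ℕ, (∑ i ∈ s, f i) ^ n = ∑ q : Fin n → s, (List.ofFn fun k => f (q k)).prod
  | 0 => by simp
  | n + 1 => by
    rw [pow_succ', Finset.sum_pow_eq_sum_prod_ofFn s f n, ← Finset.sum_coe_sort s f,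
      Finset.sum_mul_sum, Fin.sum_pi_cons]
    simp [List.ofFn_succ]

theorem List.prod_ofFn_smul {R A : Type*} [CommSemiring R] [Semiring A] [Algebra R A] :
    ∀ {n : ℕ} (c : Fin n → R) (x : Fin n → A),
      (List.ofFn fun k => c k • x k).prod = (∏ k, c k) • (List.ofFn x).prod
  | 0, _, _ => by simp
  | n + 1, c, x => by
    rw [List.ofFn_succ, List.ofFn_succ, List.prod_cons, List.prod_cons,
      List.prod_ofFn_smul, Fin.prod_univ_succ, smul_mul_smul_comm]

end NoncommExpansion

section FiberProd

variable {X M : Type*} [DecidableEq X] [Monoid M] {n : ℕ}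

def fiberProd (E : Fin n → X) (h : Fin n → M) (x : X) : M :=
  (List.ofFn fun k => if E k = x then h k else 1).prod

theorem fiberProd_cons (x₀ : X) (E : Fin n → X) (m : M) (h : Fin n → M) (x : X) :
    fiberProd (Fin.cons x₀ E) (Fin.cons m h) x
      = (if x₀ = x then m else 1) * fiberProd E h x := by
  simp [fiberProd, List.ofFn_succ]

theorem mulSupport_fiberProd_subset (E : Fin n → X) (h : Fin n → M) :
    mulSupport (fiberProd E h) ⊆ Set.range E := by
  intro x hx
  by_contra hxE
  refine hx (List.prod_eq_one fun m hm => ?_)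
  obtain ⟨k, rfl⟩ := List.mem_ofFn.mp hm
  exact if_neg fun hk => hxE ⟨k, hk⟩

theorem fiberProd_comp_of_injective {Y : Type*} [DecidableEq Y] {f : X → Y} (hf : Injective f)
    (E : Fin n → X) (h : Fin n → M) (x : X) :
    fiberProd (f ∘ E) h (f x) = fiberProd E h x := by
  simp [fiberProd, hf.eq_iff]

theorem fiberProd_eq_one_iff_eqOn (E : Fin n → X) (h : Fin n → M) :
    fiberProd E h = 1 ↔ Set.EqOn (fiberProd E h) 1 (Set.range E) :=
  ⟨fun hE _ _ => congrFun hE _, fun hE => funext fun x =>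
    if hx : x ∈ Set.range E then hE hx
    else notMem_mulSupport.mp fun hmem => hx (mulSupport_fiberProd_subset E h hmem)⟩

variable {H : Type*} [Group H]

theorem eqOn_fiberProd_cons_iff_of_mem {x₀ : X} {E : Fin n → X} (hx₀ : x₀ ∈ Set.range E)
    (m : H) (h : Fin n → H) (c : X → H) :
    Set.EqOn (fiberProd (Fin.cons x₀ E) (Fin.cons m h)) c (Set.range (Fin.cons x₀ E))
      ↔ Set.EqOn (fiberProd E h) (update c x₀ (m⁻¹ * c x₀)) (Set.range E) := by
  simp only [Set.EqOn, Fin.range_cons, Set.forall_mem_insert, fiberProd_cons]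
  rw [and_iff_right_of_imp fun hall => by simpa using hall x₀ hx₀]
  refine forall₂_congr fun x _ => ?_
  by_cases hx : x₀ = x
  · subst hx
    simp [eq_inv_mul_iff_mul_eq]
  · simp [hx, update_of_ne (Ne.symm hx)]

theorem eqOn_fiberProd_cons_iff_of_notMem {x₀ : X} {E : Fin n → X}
    (hx₀ : x₀ ∉ Set.range E) (m : H) (h : Fin n → H) (c : X → H) :
    Set.EqOn (fiberProd (Fin.cons x₀ E) (Fin.cons m h)) c (Set.range (Fin.cons x₀ E))
      ↔ m = c x₀ ∧ Set.EqOn (fiberProd E h) c (Set.range E) := by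
  have hE : fiberProd E h x₀ = 1 :=
    notMem_mulSupport.mp fun hmem => hx₀ (mulSupport_fiberProd_subset E h hmem)
  simp only [Set.EqOn, Fin.range_cons, Set.forall_mem_insert, fiberProd_cons, hE, mul_one]
  refine and_congr_right fun _ => forall₂_congr fun x hx => ?_
  rw [if_neg (ne_of_mem_of_not_mem hx hx₀).symm, one_mul]

theorem sum_ite_eqOn_fiberProd [Fintype H] :
    ∀ {n : ℕ} (E : Fin n → X) (c : X → H),
      ∑ h : Fin n → H, (if Set.EqOn (fiberProd E h) c (Set.range E)
        then (Fintype.card H : ℝ)⁻¹ ^ n else 0)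
      = (Fintype.card H : ℝ)⁻¹ ^ (Finset.univ.image E).card
  | 0, E, c => by simp
  | n + 1, E, c => by
    obtain ⟨x₀, E, rfl⟩ : ∃ x₀ E', E = Fin.cons x₀ E' :=
      ⟨_, _, (Fin.cons_self_tail E).symm⟩
    have hfactor : ∀ (P : Prop) [Decidable P],
        (if P then (Fintype.card H : ℝ)⁻¹ ^ (n + 1) else 0)
          = (Fintype.card H : ℝ)⁻¹ * if P then (Fintype.card H : ℝ)⁻¹ ^ n else 0 := by
      intro P _
      rw [mul_ite, mul_zero, pow_succ']
    have himage : Finset.univ.image (Fin.cons x₀ E : Fin (n + 1) → X)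
        = insert x₀ (Finset.univ.image E) := by
      apply Finset.coe_injective
      simp [Fin.range_cons]
    simp only [Fin.sum_pi_cons, hfactor, himage]
    by_cases hx₀ : x₀ ∈ Set.range E
    · have hcard : (Fintype.card H : ℝ) ≠ 0 := Nat.cast_ne_zero.mpr Fintype.card_ne_zero
      simp only [eqOn_fiberProd_cons_iff_of_mem hx₀, ← Finset.mul_sum,
        fun m : H => sum_ite_eqOn_fiberProd E (update c x₀ (m⁻¹ * c x₀)),
        Finset.insert_eq_of_mem (mem_image_univ_iff_mem_range.mpr hx₀), Finset.sum_const,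
        Finset.card_univ, nsmul_eq_mul]
      field_simp
    · rw [Finset.card_insert_of_notMem (mt mem_image_univ_iff_mem_range.mp hx₀), pow_succ',
        Fintype.sum_eq_single (c x₀)]
      · simp only [eqOn_fiberProd_cons_iff_of_notMem hx₀, true_and, ← Finset.mul_sum,
          sum_ite_eqOn_fiberProd E c]
      · intro m hm
        simp only [eqOn_fiberProd_cons_iff_of_notMem hx₀, hm, false_and, if_false, mul_zero,
          Finset.sum_const_zero]

end FiberProd

section EdgeWalk

variable {G H : Type} [Group G] [Group H] [Fintype H] {n : ℕ}

def walkEdge (q : Fin n → G) (k : Fin n) : Sym2 G :=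
  s(((List.ofFn q).take k).prod, ((List.ofFn q).take (k + 1)).prod)

theorem walkEdge_cons (t : G) (q : Fin n → G) :
    walkEdge (Fin.cons t q) = Fin.cons s(1, t) fun k => edgeSmul G t (walkEdge q k) := by
  funext k
  refine Fin.cases ?_ (fun k => ?_) k
  · simp [walkEdge]
  · simp [walkEdge, edgeSmul, List.ofFn_succ, List.take_succ_cons]

theorem fiberProd_walkEdge_cons (t : G) (q : Fin n → G) (m : H) (h : Fin n → H) :
    fiberProd (walkEdge (Fin.cons t q)) (Fin.cons m h)
      = pointConfE G H s(1, t) m * lampHomE G H t (fiberProd (walkEdge q) h) := by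
  funext e
  rw [walkEdge_cons, fiberProd_cons, Pi.mul_apply]
  congr 1
  · simp [pointConfE, eq_comm]
  · have he : e = edgeSmul G t (edgeSmul G t⁻¹ e) := by
      rw [edgeSmul_edgeSmul, mul_inv_cancel, edgeSmul_one]
    conv_lhs => rw [he]
    exact fiberProd_comp_of_injective (edgeSmul_injective G t) (walkEdge q) h _

noncomputable def walkLamp (q : Fin n → G) (h : Fin n → H) : WreathE G H :=
  wrE G H (fiberProd (walkEdge q) h)
    ((Set.finite_range _).subset (mulSupport_fiberProd_subset _ _)) (List.ofFn q).prod

theorem walkLamp_cons (t : G) (q : Fin n → G) (m : H) (h : Fin n → H) :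
    walkLamp (Fin.cons t q) (Fin.cons m h)
      = wrE G H (pointConfE G H s(1, t) m) (pointConfE_finite G H _ m) t * walkLamp q h := by
  apply Subtype.ext
  ext
  · simp [walkLamp, wrE, fiberProd_walkEdge_cons]
  · simp [walkLamp, wrE, List.ofFn_succ]

theorem walkLamp_eq_one_iff (q : Fin n → G) (h : Fin n → H) :
    walkLamp q h = 1 ↔ fiberProd (walkEdge q) h = 1 ∧ (List.ofFn q).prod = 1 := by
  rw [← Subtype.coe_inj]
  exact SemidirectProduct.ext_iff

end EdgeWalk

section EdgeLamplighterWalk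

variable {G H : Type} [Group G] [Group H] [Fintype H]

theorem nuEdge_mul_deltaGE (t : G) :
    nuEdge G H s(1, t) * deltaGE G H t
      = ∑ m : H, single (wrE G H (pointConfE G H s(1, t) m) (pointConfE_finite G H _ m) t)
          (Fintype.card H : ℝ)⁻¹ := by
  simp only [nuEdge, deltaGE, Finset.sum_mul, single_mul_single, mul_one]
  refine Finset.sum_congr rfl fun m _ => congrArg (single · _) (Subtype.ext ?_)
  ext <;> simp [wrE, embGE]

theorem prod_ofFn_nuEdge_mul_deltaGE : ∀ {n : ℕ} (q : Fin n → G),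
    (List.ofFn fun k => nuEdge G H s(1, q k) * deltaGE G H (q k)).prod
      = ∑ h : Fin n → H, single (walkLamp q h) ((Fintype.card H : ℝ)⁻¹ ^ n)
  | 0, q => by
    rw [Fintype.sum_subsingleton _ finZeroElim, pow_zero, List.ofFn_zero, List.prod_nil,
      (walkLamp_eq_one_iff q _).mpr ⟨funext fun _ => rfl, rfl⟩, one_def]
  | n + 1, q => by
    obtain ⟨t, q, rfl⟩ : ∃ t q', q = Fin.cons t q' := ⟨_, _, (Fin.cons_self_tail q).symm⟩
    simp only [List.ofFn_succ, Fin.cons_zero, Fin.cons_succ, List.prod_cons]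
    rw [prod_ofFn_nuEdge_mul_deltaGE q, nuEdge_mul_deltaGE, Finset.sum_mul_sum, Fin.sum_pi_cons]
    simp only [single_mul_single, walkLamp_cons, pow_succ']

theorem coeff_one_prod_ofFn_nuEdge_mul_deltaGE {n : ℕ} (q : Fin n → G) :
    (List.ofFn fun k => nuEdge G H s(1, q k) * deltaGE G H (q k)).prod.coeff 1
      = if (List.ofFn q).prod = 1
        then (Fintype.card H : ℝ)⁻¹ ^ (Finset.univ.image (walkEdge q)).card else 0 := by
  rw [prod_ofFn_nuEdge_mul_deltaGE, coeff_sum, Finset.sum_apply']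
  simp only [coeff_single, Finsupp.single_apply, walkLamp_eq_one_iff, fiberProd_eq_one_iff_eqOn]
  split_ifs with hq
  · simp only [hq, and_true]
    exact sum_ite_eqOn_fiberProd _ 1
  · simp [hq]

end EdgeLamplighterWalk

theorem edge_lamplighter_return_probability_general (G H : Type) [Group G] [Group H] [Fintype H]
    (S : Finset G)
    (μ : MonoidAlgebra ℝ G)
    (hμsupp : ↑μ.coeff.support ⊆ (S : Set G)) (n : ℕ) :
    ((∑ t ∈ S, μ.coeff t • (nuEdge G H s((1 : G), t) * deltaGE G H t)) ^ n).coeff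
        (1 : WreathE G H)
      = ∑ q : Fin n → {g : G // g ∈ μ.coeff.support},
          (if (List.ofFn fun i => (q i : G)).prod = 1 then
            (∏ i, μ.coeff (q i : G)) *
              ((Fintype.card H : ℝ))⁻¹ ^
                (Finset.image
                  (fun k : Fin n =>
                    s((((List.ofFn fun i => (q i : G)).take k).prod),
                      (((List.ofFn fun i => (q i : G)).take (k + 1)).prod)))
                  Finset.univ).card
          else 0) := by
  have hsupp : ∑ t ∈ S, μ.coeff t • (nuEdge G H s((1 : G), t) * deltaGE G H t)
      = ∑ t ∈ μ.coeff.support, μ.coeff t • (nuEdge G H s((1 : G), t) * deltaGE G H t) :=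
    (Finset.sum_subset hμsupp fun t _ ht => by
      rw [Finsupp.notMem_support_iff.mp ht, zero_smul]).symm
  rw [hsupp, Finset.sum_pow_eq_sum_prod_ofFn, MonoidAlgebra.coeff_sum, Finset.sum_apply']
  refine Finset.sum_congr rfl fun q _ => ?_
  rw [List.prod_ofFn_smul, MonoidAlgebra.coeff_smul_apply,
    coeff_one_prod_ofFn_nuEdge_mul_deltaGE, smul_eq_mul, mul_ite, mul_zero]
  rfl

/-- (Lamps on edges.)  Let `μ` be a symmetric probability
measure supported on the finite symmetric generating set `S` of `G`, `H` a
finite group, `p = 1/|H|`, and consider the random walk on `(⊕_E H) ⋊ G` with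
law `μ̃_ed = ∑_{t ∈ S} μ(t) · ν_{[e,t]} * δ_t` (i.e. `μ̃_ed(η,g) = μ(g)/|H|`
iff `g ∈ S` and `supp η ⊆ {[e,g]}`).  Then `μ̃_ed^{(n)}(1,e)` equals the
expectation of `p^{#distinct edges crossed}` over the `n`-step `μ`-walks on
`G` returning to `e`. -/
theorem edge_lamplighter_return_probability (G H : Type) [Group G] [Group H] [Fintype H]
    (S : Finset G) (hS : ∀ t ∈ S, t⁻¹ ∈ S)
    (μ : MonoidAlgebra ℝ G) (hμpos : ∀ g : G, 0 ≤ μ.coeff g)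
    (hμsupp : ↑μ.coeff.support ⊆ (S : Set G)) (hμsym : ∀ g : G, μ.coeff g⁻¹ = μ.coeff g)
    (hμprob : ∑ g ∈ μ.coeff.support, μ.coeff g = 1) (n : ℕ) :
    ((∑ t ∈ S, μ.coeff t • (nuEdge G H s((1 : G), t) * deltaGE G H t)) ^ n).coeff
        (1 : WreathE G H)
      = ∑ q : Fin n → {g : G // g ∈ μ.coeff.support},
          (if (List.ofFn fun i => (q i : G)).prod = 1 then
            (∏ i, μ.coeff (q i : G)) *
              ((Fintype.card H : ℝ))⁻¹ ^
                (Finset.image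
                  (fun k : Fin n =>
                    s((((List.ofFn fun i => (q i : G)).take k).prod),
                      (((List.ofFn fun i => (q i : G)).take (k + 1)).prod)))
                  Finset.univ).card
          else 0) :=
  edge_lamplighter_return_probability_general G H S μ hμsupp n
end
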